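/- arXiv:2001.10088 — 2 statements merged into one kernel-verified Lean document; each statement's English description precedes it below -/
import Mathlib

section
/- Let C be a category with finite products, terminal object 1, and Φ a product-closed filter of subobjects of 1. Define Hom_{C_Φ}(X, Y) = colim_{V ∈ Φ^op} Hom_C(X × V, Y), with composition of [f : X × U → Y] and [g : Y × V → Z] given by [g ∘ (f × id_V) : X × (U × V) → Z] (using the canonical isomorphism (X × U) × V ≅ X × (U × V)). Then this composition is well-defined on equivalence classes and associative, so C_Φ is a category with the same objects as C. -/
set_option linter.unusedSectionVars false
set_option linter.unusedVariables false

open CategoryTheory CategoryTheory.Limits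

universe v u

variable {C : Type u} [Category.{v} C] [HasTerminal C] [HasBinaryProducts C]

/-- Maps into a subobject of the terminal object are unique. -/
lemma hom_to_subterminal_subsingleton (A : C) (V : Subobject (⊤_ C)) :
    Subsingleton (A ⟶ (V : C)) :=
  ⟨fun u v => (cancel_mono V.arrow).1 (Subsingleton.elim _ _)⟩

instance prod_subterminal_mono (U V : Subobject (⊤_ C)) :
    Mono (terminal.from ((U : C) ⨯ (V : C))) := by
  constructor
  intro A f g _
  haveI := hom_to_subterminal_subsingleton (C := C) A U
  haveI := hom_to_subterminal_subsingleton (C := C) A V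
  apply Limits.prod.hom_ext
  · exact Subsingleton.elim _ _
  · exact Subsingleton.elim _ _

/-- The product of two subobjects `U, V` of the terminal object, as a
subobject of the terminal object. This is the meet of `U` and `V` in `Sub(1)`. -/
noncomputable def prodSub (U V : Subobject (⊤_ C)) : Subobject (⊤_ C) :=
  Subobject.mk (terminal.from ((U : C) ⨯ (V : C)))

variable (Φ : Set (Subobject (⊤_ C)))

/-- A representative of a morphism `X ⟶ Y` in the filter quotient `C_Φ`:
a morphism `X × V ⟶ Y` for some `V ∈ Φ`. -/
structure FQRep (X Y : C) where
  V : Subobject (⊤_ C)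
  mem : V ∈ Φ
  hom : X ⨯ (V : C) ⟶ Y

/-- The restriction of a representative `f : X × V ⟶ Y` along `U ≤ V`. -/
noncomputable def FQRep.restrict {X Y : C} (f : FQRep Φ X Y) {U : Subobject (⊤_ C)}
    (h : U ≤ f.V) : X ⨯ (U : C) ⟶ Y :=
  Limits.prod.map (𝟙 X) (Subobject.ofLE U f.V h) ≫ f.hom

/-- Two representatives are related iff their restrictions to some common
`U ∈ Φ` agree. -/
def filterRel {X Y : C} (f g : FQRep Φ X Y) : Prop :=
  ∃ U ∈ Φ, ∃ (h₁ : U ≤ f.V) (h₂ : U ≤ g.V), f.restrict Φ h₁ = g.restrict Φ h₂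

/-- Composition of representatives: for `f : X × U ⟶ Y` and `g : Y × V ⟶ Z`,
the composite `g ∘ (f × id_V) : X × (U × V) ⟶ Z` (using the canonical
isomorphism `(X × U) × V ≅ X × (U × V)`), a representative over `U × V ∈ Φ`. -/
noncomputable def compFQRep {X Y Z : C}
    (hProd : ∀ U ∈ Φ, ∀ V ∈ Φ, prodSub U V ∈ Φ)
    (f : FQRep Φ X Y) (g : FQRep Φ Y Z) : FQRep Φ X Z where
  V := prodSub f.V g.V
  mem := hProd _ f.mem _ g.mem
  hom := Limits.prod.map (𝟙 X) (Subobject.underlyingIso _).hom ≫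
    (Limits.prod.associator X (f.V : C) (g.V : C)).inv ≫
    Limits.prod.map f.hom (𝟙 (g.V : C)) ≫ g.hom

/-
Every subobject `V` of the terminal object is subterminal: there is at most one map from any
object into `V`. So a representative `X ⨯ V ⟶ Y`, evaluated on a generalized element `(x, v)`,
only depends on `x`, and the composite representative evaluates componentwise whatever
components into `f.V`, `g.V` are chosen. Restricting a composite to `U ⨯ V` therefore gives
the composite of the restrictions, which is well-definedness; and both bracketings of a triple
composite evaluate to the same iterated expression, which is associativity.
-/

section

attribute [local instance] hom_to_subterminal_subsingleton

variable {Φ}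

lemma prodSub_le_left (U V : Subobject (⊤_ C)) : prodSub U V ≤ U :=
  Subobject.mk_le_of_comm prod.fst (Subsingleton.elim _ _)

lemma prodSub_le_right (U V : Subobject (⊤_ C)) : prodSub U V ≤ V :=
  Subobject.mk_le_of_comm prod.snd (Subsingleton.elim _ _)

lemma le_prodSub {U V W : Subobject (⊤_ C)} (hU : W ≤ U) (hV : W ≤ V) : W ≤ prodSub U V :=
  Subobject.le_mk_of_comm (prod.lift (Subobject.ofLE _ _ hU) (Subobject.ofLE _ _ hV))
    (Subsingleton.elim _ _)

lemma prodSub_mono {U U' V V' : Subobject (⊤_ C)} (hU : U ≤ U') (hV : V ≤ V') :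
    prodSub U V ≤ prodSub U' V' :=
  le_prodSub ((prodSub_le_left U V).trans hU) ((prodSub_le_right U V).trans hV)

lemma prodSub_assoc_le (U V W : Subobject (⊤_ C)) :
    prodSub (prodSub U V) W ≤ prodSub U (prodSub V W) :=
  le_prodSub ((prodSub_le_left _ _).trans (prodSub_le_left _ _))
    (prodSub_mono (prodSub_le_right _ _) le_rfl)

lemma FQRep.prod_lift_comp_restrict {Q X Y : C} (f : FQRep Φ X Y) {U : Subobject (⊤_ C)}
    (h : U ≤ f.V) (x : Q ⟶ X) (u : Q ⟶ (U : C)) (v : Q ⟶ (f.V : C)) :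
    prod.lift x u ≫ f.restrict Φ h = prod.lift x v ≫ f.hom := by
  rw [FQRep.restrict, prod.lift_map_assoc, Category.comp_id, Subsingleton.elim (u ≫ _) v]

lemma CategoryTheory.Limits.prod.lift_map_associator_inv {D : Type*} [Category D]
    [HasBinaryProducts D] {Q X A B P : D} (x : Q ⟶ X) (w : Q ⟶ P) (e : P ⟶ A ⨯ B) :
    prod.lift x w ≫ prod.map (𝟙 X) e ≫ (Limits.prod.associator X A B).inv =
      prod.lift (prod.lift x (w ≫ e ≫ prod.fst)) (w ≫ e ≫ prod.snd) := by
  rw [Limits.prod.associator_inv, prod.lift_map_assoc, Category.comp_id, prod.comp_lift,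
    prod.comp_lift, prod.lift_fst, prod.lift_snd_assoc, prod.lift_snd_assoc, Category.assoc,
    Category.assoc]

lemma prod_lift_comp_compFQRep_hom {Q X Y Z : C} (hProd : ∀ U ∈ Φ, ∀ V ∈ Φ, prodSub U V ∈ Φ)
    (f : FQRep Φ X Y) (g : FQRep Φ Y Z) (x : Q ⟶ X)
    (w : Q ⟶ ((compFQRep Φ hProd f g).V : C)) (u : Q ⟶ (f.V : C)) (v : Q ⟶ (g.V : C)) :
    prod.lift x w ≫ (compFQRep Φ hProd f g).hom =
      prod.lift (prod.lift x u ≫ f.hom) v ≫ g.hom := by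
  -- `(compFQRep Φ hProd f g).V` is `prodSub f.V g.V` only up to unfolding, hence `change`/`erw`.
  change prod.lift x w ≫ prod.map (𝟙 X) _ ≫ (Limits.prod.associator _ _ _).inv ≫
    prod.map f.hom (𝟙 _) ≫ g.hom = _
  erw [reassoc_of% prod.lift_map_associator_inv]
  rw [prod.lift_map_assoc, Category.comp_id]
  congr 4 <;> apply Subsingleton.elim

lemma FQRep.restrict_eq_prod_lift_comp_hom {X Y : C} (f : FQRep Φ X Y) {U : Subobject (⊤_ C)}
    (h : U ≤ f.V) (v : (U : C) ⟶ (f.V : C)) :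
    f.restrict Φ h = prod.lift prod.fst (prod.snd ≫ v) ≫ f.hom := by
  rw [← f.prod_lift_comp_restrict h prod.fst prod.snd, prod.lift_fst_snd, Category.id_comp]

lemma restrict_compFQRep {X Y Z : C} (hProd : ∀ U ∈ Φ, ∀ V ∈ Φ, prodSub U V ∈ Φ)
    (f : FQRep Φ X Y) (g : FQRep Φ Y Z) {U V : Subobject (⊤_ C)} (hf : U ≤ f.V) (hg : V ≤ g.V)
    (h : prodSub U V ≤ (compFQRep Φ hProd f g).V) :
    (compFQRep Φ hProd f g).restrict Φ h =
      prod.lift (prod.lift prod.fst (prod.snd ≫ Subobject.ofLE _ _ (prodSub_le_left U V)) ≫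
        f.restrict Φ hf) (prod.snd ≫ Subobject.ofLE _ _ (prodSub_le_right U V)) ≫
        g.restrict Φ hg := by
  let u : ((prodSub U V : Subobject (⊤_ C)) : C) ⟶ (f.V : C) :=
    Subobject.ofLE _ _ ((prodSub_le_left U V).trans hf)
  let v : ((prodSub U V : Subobject (⊤_ C)) : C) ⟶ (g.V : C) :=
    Subobject.ofLE _ _ ((prodSub_le_right U V).trans hg)
  rw [FQRep.restrict_eq_prod_lift_comp_hom _ h (Subobject.ofLE _ _ h),
    prod_lift_comp_compFQRep_hom (u := prod.snd ≫ u) (v := prod.snd ≫ v),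
    f.prod_lift_comp_restrict hf _ _ (prod.snd ≫ u),
    g.prod_lift_comp_restrict hg _ _ (prod.snd ≫ v)]

lemma restrict_compFQRep_assoc {X Y Z W : C} (hProd : ∀ U ∈ Φ, ∀ V ∈ Φ, prodSub U V ∈ Φ)
    (f : FQRep Φ X Y) (g : FQRep Φ Y Z) (h : FQRep Φ Z W)
    (hle : (compFQRep Φ hProd (compFQRep Φ hProd f g) h).V ≤
      (compFQRep Φ hProd f (compFQRep Φ hProd g h)).V) :
    (compFQRep Φ hProd (compFQRep Φ hProd f g) h).restrict Φ le_rfl =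
      (compFQRep Φ hProd f (compFQRep Φ hProd g h)).restrict Φ hle := by
  let a : ((compFQRep Φ hProd (compFQRep Φ hProd f g) h).V : C) ⟶ (f.V : C) :=
    Subobject.ofLE _ _ ((prodSub_le_left _ _).trans (prodSub_le_left _ _))
  let b : ((compFQRep Φ hProd (compFQRep Φ hProd f g) h).V : C) ⟶ (g.V : C) :=
    Subobject.ofLE _ _ ((prodSub_le_left _ _).trans (prodSub_le_right _ _))
  let c : ((compFQRep Φ hProd (compFQRep Φ hProd f g) h).V : C) ⟶ (h.V : C) :=
    Subobject.ofLE _ _ (prodSub_le_right _ _)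
  let ab : ((compFQRep Φ hProd (compFQRep Φ hProd f g) h).V : C) ⟶
      ((compFQRep Φ hProd f g).V : C) :=
    Subobject.ofLE _ _ (prodSub_le_left _ _)
  let bc : ((compFQRep Φ hProd (compFQRep Φ hProd f g) h).V : C) ⟶
      ((compFQRep Φ hProd g h).V : C) :=
    Subobject.ofLE _ _ (prodSub_mono (prodSub_le_right _ _) le_rfl)
  rw [FQRep.restrict_eq_prod_lift_comp_hom _ _ (𝟙 _),
    FQRep.restrict_eq_prod_lift_comp_hom _ _ (Subobject.ofLE _ _ hle),
    prod_lift_comp_compFQRep_hom (u := prod.snd ≫ ab) (v := prod.snd ≫ c),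
    prod_lift_comp_compFQRep_hom (u := prod.snd ≫ a) (v := prod.snd ≫ b),
    prod_lift_comp_compFQRep_hom (u := prod.snd ≫ a) (v := prod.snd ≫ bc),
    prod_lift_comp_compFQRep_hom (u := prod.snd ≫ b) (v := prod.snd ≫ c)]

end

theorem filterQuotient_comp_wellDefined_and_assoc
    (hProd : ∀ U ∈ Φ, ∀ V ∈ Φ, prodSub U V ∈ Φ) :
    (∀ (X Y Z : C) (f f' : FQRep Φ X Y) (g g' : FQRep Φ Y Z),
      filterRel Φ f f' → filterRel Φ g g' →
        filterRel Φ (compFQRep Φ hProd f g) (compFQRep Φ hProd f' g')) ∧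
    (∀ (X Y Z W : C) (f : FQRep Φ X Y) (g : FQRep Φ Y Z) (h : FQRep Φ Z W),
      filterRel Φ (compFQRep Φ hProd (compFQRep Φ hProd f g) h)
        (compFQRep Φ hProd f (compFQRep Φ hProd g h))) := by
  constructor
  · rintro X Y Z f f' g g' ⟨U, hU, hf, hf', hff'⟩ ⟨V, hV, hg, hg', hgg'⟩
    have hle : prodSub U V ≤ (compFQRep Φ hProd f g).V := prodSub_mono hf hg
    have hle' : prodSub U V ≤ (compFQRep Φ hProd f' g').V := prodSub_mono hf' hg'
    refine ⟨prodSub U V, hProd U hU V hV, hle, hle', ?_⟩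
    rw [restrict_compFQRep hProd f g hf hg, restrict_compFQRep hProd f' g' hf' hg', hff', hgg']
  · intro X Y Z W f g h
    exact ⟨_, (compFQRep Φ hProd (compFQRep Φ hProd f g) h).mem, le_rfl, prodSub_assoc_le _ _ _,
      restrict_compFQRep_assoc hProd f g h _⟩
end

section
/- Let C be a category whose terminal object has exactly two subobjects (an initial object 0 and 1 itself), I a set, and Φ a filter on P(I). In the product category C^I with the filter product equivalence (two families of maps (f_i), (g_i) : (X_i) → (Y_i) are identified iff {i : f_i = g_i} ∈ Φ), a family (f_i)_{i∈I} becomes an isomorphism in the filter product ∏_Φ C if and only if {i ∈ I : f_i is an isomorphism in C} ∈ Φ. -/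
set_option linter.unusedSectionVars false
set_option linter.unusedVariables false

open CategoryTheory CategoryTheory.Limits

universe w v u

variable {I : Type w} {C : Type u} [Category.{v} C]

/-- A representative of a morphism `(X_i) ⟶ (Y_i)` in the filter product
`∏_Φ C`: a family of morphisms defined on some member `S` of the filter `Φ`. -/
structure FPRep (Φ : Set (Set I)) (X Y : I → C) where
  S : Set I
  mem : S ∈ Φ
  f : ∀ i ∈ S, X i ⟶ Y i

/-- Two representatives are identified iff they agree on some member of `Φ`. -/
def fpRel {Φ : Set (Set I)} {X Y : I → C} (p q : FPRep Φ X Y) : Prop :=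
  ∃ U ∈ Φ, ∃ (h₁ : U ⊆ p.S) (h₂ : U ⊆ q.S),
    ∀ i (hi : i ∈ U), p.f i (h₁ hi) = q.f i (h₂ hi)

/-- Composition of representatives, defined on the intersection. -/
def compFPRep {Φ : Set (Set I)} (hInter : ∀ S ∈ Φ, ∀ T ∈ Φ, S ∩ T ∈ Φ)
    {X Y Z : I → C} (p : FPRep Φ X Y) (q : FPRep Φ Y Z) : FPRep Φ X Z :=
  ⟨p.S ∩ q.S, hInter _ p.mem _ q.mem, fun i hi => p.f i hi.1 ≫ q.f i hi.2⟩

/-- The representative associated to an everywhere-defined family of maps. -/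
def totalFPRep {Φ : Set (Set I)} (hUniv : Set.univ ∈ Φ) {X Y : I → C}
    (f : ∀ i, X i ⟶ Y i) : FPRep Φ X Y :=
  ⟨Set.univ, hUniv, fun i _ => f i⟩

/-- Łoś's theorem for isomorphisms in a filter product: for a category `C`
whose terminal object has exactly two subobjects, a set `I` and a filter `Φ`
on `P(I)`, a family `(f_i)_{i ∈ I}` becomes an isomorphism in `∏_Φ C` (i.e.
admits a two-sided inverse up to the filter relation) if and only if
`{i : f_i is an isomorphism} ∈ Φ`. -/
theorem filterProduct_isIso_iff [HasTerminal C]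
    (hTwo : ∃ a b : Subobject (⊤_ C), a ≠ b ∧ ∀ v : Subobject (⊤_ C), v = a ∨ v = b)
    (Φ : Set (Set I))
    (hUniv : Set.univ ∈ Φ)
    (hInter : ∀ S ∈ Φ, ∀ T ∈ Φ, S ∩ T ∈ Φ)
    (hUp : ∀ S ∈ Φ, ∀ T : Set I, S ⊆ T → T ∈ Φ)
    (X Y : I → C) (f : ∀ i, X i ⟶ Y i) :
    (∃ g : FPRep Φ Y X,
      fpRel (compFPRep hInter (totalFPRep hUniv f) g)
        (totalFPRep hUniv fun i => 𝟙 (X i)) ∧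
      fpRel (compFPRep hInter g (totalFPRep hUniv f))
        (totalFPRep hUniv fun i => 𝟙 (Y i))) ↔
    {i : I | IsIso (f i)} ∈ Φ := by
  constructor
  · rintro ⟨g, ⟨U₁, hU₁, hs₁, _, e₁⟩, ⟨U₂, hU₂, hs₂, _, e₂⟩⟩
    refine hUp _ (hInter _ hU₁ _ hU₂) _ ?_
    rintro i ⟨hi₁, hi₂⟩
    have h₁ : f i ≫ g.f i (hs₁ hi₁).2 = 𝟙 (X i) := e₁ i hi₁
    have h₂ : g.f i (hs₂ hi₂).1 ≫ f i = 𝟙 (Y i) := e₂ i hi₂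
    exact ⟨g.f i (hs₁ hi₁).2, h₁, by convert h₂ using 2⟩
  · intro hT
    refine ⟨⟨_, hT, fun i hi => @CategoryTheory.inv _ _ _ _ (f i) hi⟩, ?_, ?_⟩
    · refine ⟨_, hT, fun i hi => ⟨trivial, hi⟩, fun i _ => trivial, fun i hi => ?_⟩
      exact @IsIso.hom_inv_id _ _ _ _ (f i) hi
    · refine ⟨_, hT, fun i hi => ⟨hi, trivial⟩, fun i _ => trivial, fun i hi => ?_⟩
      exact @IsIso.inv_hom_id _ _ _ _ (f i) hi
end
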